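/- Let E be a finite-dimensional real inner product space, X ⊆ E a compact convex set of diameter at most D > 0, and f : E → ℝ a convex differentiable function that is L-smooth on X (L > 0), with f* = min_{y∈X} f(y). Let T ≥ 1 and let (x_t)_{t=0}^T, (S_t)_{t=0}^T, a_t, s_t, v_t satisfy exactly the Corrective Frank-Wolfe iteration conditions: (i) if ⟨∇f(x_t), a_t − s_t⟩ ≥ ⟨∇f(x_t), x_t − v_t⟩, then either [drop step] f(x_{t+1}) ≤ f(x_t), S_{t+1} ⊆ S_t, and |S_{t+1}| < |S_t|, or [descent step] f(x_t) − f(x_{t+1}) ≥ ⟨∇f(x_t), a_t − s_t⟩² / (2 L D²) and S_{t+1} ⊆ S_t; (ii) otherwise x_{t+1} = x_t + γ_t (v_t − x_t) with γ_t an exact line-search minimizer over [0,1] and S_{t+1} = S_t ∪ {v_t}; where S_0 = {x_0} and x_t ∈ conv(S_t). Assume additionally there are constants c > 0 and δ > 0 such that for every t < T, (1/c) · (f(x_t) − f*)^{1/2} ≤ ⟨∇f(x_t), a_t − v_t⟩ / δ. Then f(x_T) − f* ≤ (f(x_0) − f*) · exp( − min{1/4, δ²/(16 L c² D²)} · T ).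 -/

import Mathlib

/-!
Write `h t = f (x t) - f*` and `r = min (1/2) (δ²/(8Lc²D²))`. Since `s t` is minimal over the
active set whose hull contains `x t`, the sharpness estimate bounds `(δ/2c)·√(h t)` by the gap `Q`
that the chosen step works with, and convexity gives `h t ≤ Q`. A descent step (corrective or
line-search Frank-Wolfe) decreases `f` by at least `min (Q/2) (Q²/(2LD²)) ≥ r·h t`; every other
step is a drop step, which does not increase `f` and removes an atom. The active set starts with
one atom and gains at most one per descent step, so at least half of the steps contract `h` by
`1 - r ≤ exp (-r)`.
-/

open RealInnerProductSpace Set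

section InnerProduct

variable {E : Type*} [NormedAddCommGroup E] [InnerProductSpace ℝ E]

theorem ConvexOn.inner_gradient_le_sub {f : E → ℝ} {g : E → E} (hconv : ConvexOn ℝ univ f)
    (hdiff : ∀ p, HasFDerivAt f (innerSL ℝ (g p)) p) (p q : E) :
    ⟪g p, q - p⟫ ≤ f q - f p := by
  have hφ : HasDerivAt (f ∘ AffineMap.lineMap (k := ℝ) p q) ⟪g p, q - p⟫ 0 := by
    simpa using (hdiff (AffineMap.lineMap p q (0 : ℝ))).comp_hasDerivAt (0 : ℝ)
      AffineMap.hasDerivAt_lineMap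
  simpa [slope_def_field] using
    (hconv.comp_affineMap (AffineMap.lineMap p q)).le_slope_of_hasDerivAt
      (mem_univ 0) (mem_univ 1) zero_lt_one hφ

theorem le_inner_of_mem_convexHull {G x : E} {s : Set E} {b : ℝ} (hb : ∀ u ∈ s, b ≤ ⟪G, u⟫)
    (hx : x ∈ convexHull ℝ s) : b ≤ ⟪G, x⟫ :=
  convexHull_min hb (convex_halfSpace_ge (innerₛₗ ℝ G).isLinear b) hx

theorem apply_add_smul_sub_le_of_smooth {X : Set E} {f : E → ℝ} {g : E → E} {L D : ℝ}
    (hXconv : Convex ℝ X)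
    (hsmooth : ∀ p ∈ X, ∀ q ∈ X, f q - f p ≤ ⟪g p, q - p⟫ + L / 2 * ‖q - p‖ ^ 2)
    (hL : 0 ≤ L) {x v : E} (hx : x ∈ X) (hv : v ∈ X) (hvx : ‖v - x‖ ≤ D)
    {γ : ℝ} (hγ : γ ∈ Icc (0 : ℝ) 1) :
    f (x + γ • (v - x)) ≤ f x - γ * ⟪g x, x - v⟫ + L / 2 * γ ^ 2 * D ^ 2 := by
  have hsm := hsmooth x hx _ (hXconv.add_smul_sub_mem hx hv hγ)
  rw [add_sub_cancel_left, real_inner_smul_right, norm_smul, Real.norm_eq_abs, mul_pow,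
    sq_abs] at hsm
  have hflip : ⟪g x, v - x⟫ = -⟪g x, x - v⟫ := by rw [← inner_neg_right, neg_sub]
  have hnorm : ‖v - x‖ ^ 2 ≤ D ^ 2 := pow_le_pow_left₀ (norm_nonneg _) hvx 2
  rw [hflip] at hsm
  linarith [mul_le_mul_of_nonneg_left hnorm (by positivity : 0 ≤ L / 2 * γ ^ 2)]

theorem min_le_sub_of_lineSearch {X : Set E} {f : E → ℝ} {g : E → E} {L D : ℝ}
    (hXconv : Convex ℝ X)
    (hsmooth : ∀ p ∈ X, ∀ q ∈ X, f q - f p ≤ ⟪g p, q - p⟫ + L / 2 * ‖q - p‖ ^ 2)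
    (hL : 0 < L) (hD : 0 < D) {x v y : E} (hx : x ∈ X) (hv : v ∈ X) (hvx : ‖v - x‖ ≤ D)
    (hy : ∀ γ ∈ Icc (0 : ℝ) 1, f y ≤ f (x + γ • (v - x))) :
    min (⟪g x, x - v⟫ / 2) (⟪g x, x - v⟫ ^ 2 / (2 * L * D ^ 2)) ≤ f x - f y := by
  set Q := ⟪g x, x - v⟫
  have hdesc : ∀ γ ∈ Icc (0 : ℝ) 1, f y ≤ f x - γ * Q + L / 2 * γ ^ 2 * D ^ 2 := fun γ hγ =>
    (hy γ hγ).trans (apply_add_smul_sub_le_of_smooth hXconv hsmooth hL.le hx hv hvx hγ)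
  have hLD : 0 < L * D ^ 2 := by positivity
  rcases le_or_gt Q 0 with hQ | hQ
  · have := hdesc 0 ⟨le_rfl, zero_le_one⟩
    norm_num at this
    exact (min_le_left _ _).trans (by linarith)
  rcases le_or_gt Q (L * D ^ 2) with hQLD | hQLD
  -- the unconstrained minimiser `Q / (L D²)` of the quadratic upper bound
  · have := hdesc (Q / (L * D ^ 2)) ⟨by positivity, (div_le_one hLD).mpr hQLD⟩
    refine (min_le_right _ _).trans ?_
    have hval : Q / (L * D ^ 2) * Q - L / 2 * (Q / (L * D ^ 2)) ^ 2 * D ^ 2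
        = Q ^ 2 / (2 * L * D ^ 2) := by
      field_simp
      ring
    linarith
  · have := hdesc 1 ⟨zero_le_one, le_rfl⟩
    refine (min_le_left _ _).trans ?_
    linarith

theorem sub_le_inner_sub_of_forall_inner_le {X : Set E} {f : E → ℝ} {g : E → E}
    (hconv : ConvexOn ℝ univ f) (hdiff : ∀ p, HasFDerivAt f (innerSL ℝ (g p)) p)
    {x v xm : E} (hxm : xm ∈ X) (hv : ∀ u ∈ X, ⟪g x, v⟫ ≤ ⟪g x, u⟫) :
    f x - f xm ≤ ⟪g x, x - v⟫ := by
  have hgrad := hconv.inner_gradient_le_sub hdiff x xm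
  have hvxm := hv xm hxm
  rw [inner_sub_right] at hgrad ⊢
  linarith

theorem min_mul_le_of_sharp {L D c δ h P Q dec : ℝ} (hL : 0 < L) (hD : 0 < D) (hc : 0 < c)
    (hδ : 0 < δ) (hh : 0 ≤ h) (hhQ : h ≤ Q) (hsharp : 1 / c * √h ≤ P / δ) (hPQ : P ≤ 2 * Q)
    (hdec : min (Q / 2) (Q ^ 2 / (2 * L * D ^ 2)) ≤ dec) :
    min (1 / 2) (δ ^ 2 / (8 * L * c ^ 2 * D ^ 2)) * h ≤ dec := by
  have hlin : δ * √h ≤ 2 * c * Q := by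
    rw [one_div_mul_eq_div, div_le_div_iff₀ hc hδ] at hsharp
    nlinarith
  have hsq : δ ^ 2 * h ≤ 4 * c ^ 2 * Q ^ 2 := by
    have := pow_le_pow_left₀ (by positivity) hlin 2
    rw [mul_pow, Real.sq_sqrt hh, mul_pow, mul_pow] at this
    linarith
  refine le_trans (le_min ?_ ?_) hdec
  · calc min (1 / 2) (δ ^ 2 / (8 * L * c ^ 2 * D ^ 2)) * h ≤ 1 / 2 * h := by
          gcongr; exact min_le_left _ _
      _ ≤ Q / 2 := by linarith
  · calc min (1 / 2) (δ ^ 2 / (8 * L * c ^ 2 * D ^ 2)) * h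
        ≤ δ ^ 2 / (8 * L * c ^ 2 * D ^ 2) * h := by gcongr; exact min_le_right _ _
      _ = δ ^ 2 * h / (4 * c ^ 2) / (2 * L * D ^ 2) := by field_simp; ring
      _ ≤ Q ^ 2 / (2 * L * D ^ 2) := by
          gcongr
          rw [div_le_iff₀ (by positivity)]
          linarith

theorem exists_pow_bound_of_contract_or_drop {h : ℕ → ℝ} {k : ℕ → ℕ} {r : ℝ} {T : ℕ}
    (hr : r ≤ 1) (hk0 : k 0 ≤ 1)
    (hstep : ∀ t < T, (h (t + 1) ≤ (1 - r) * h t ∧ k (t + 1) ≤ k t + 1) ∨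
      (h (t + 1) ≤ h t ∧ k (t + 1) < k t)) :
    ∀ t ≤ T, ∃ n : ℕ, h t ≤ h 0 * (1 - r) ^ n ∧ t + k t ≤ 2 * n + 1 := by
  intro t
  induction t with
  | zero => exact fun _ => ⟨0, by simp, by omega⟩
  | succ t ih =>
    intro ht
    obtain ⟨n, hhn, hkn⟩ := ih (by omega)
    rcases hstep t (by omega) with ⟨hcontract, hk⟩ | ⟨hdrop, hk⟩
    · refine ⟨n + 1, ?_, by omega⟩
      calc h (t + 1) ≤ (1 - r) * h t := hcontract
        _ ≤ (1 - r) * (h 0 * (1 - r) ^ n) := by gcongr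
        _ = h 0 * (1 - r) ^ (n + 1) := by ring
    · exact ⟨n, hdrop.trans hhn, by omega⟩

theorem le_mul_exp_of_contract_or_drop {h : ℕ → ℝ} {k : ℕ → ℕ} {r : ℝ} {T : ℕ}
    (hr0 : 0 ≤ r) (hr : r ≤ 1) (hh0 : 0 ≤ h 0) (hk0 : k 0 ≤ 1) (hkT : 1 ≤ k T)
    (hstep : ∀ t < T, (h (t + 1) ≤ (1 - r) * h t ∧ k (t + 1) ≤ k t + 1) ∨
      (h (t + 1) ≤ h t ∧ k (t + 1) < k t)) :
    h T ≤ h 0 * Real.exp (-(r / 2) * T) := by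
  obtain ⟨n, hhn, hkn⟩ := exists_pow_bound_of_contract_or_drop hr hk0 hstep T le_rfl
  have hTn : (T : ℝ) ≤ 2 * n := by exact_mod_cast (by omega : T ≤ 2 * n)
  calc h T ≤ h 0 * (1 - r) ^ n := hhn
    _ ≤ h 0 * Real.exp (-r) ^ n := by
        gcongr; linarith [Real.add_one_le_exp (-r)]
    _ ≤ h 0 * Real.exp (-(r / 2) * T) := by
        rw [← Real.exp_nat_mul]
        gcongr h 0 * Real.exp ?_
        nlinarith

theorem corrective_frank_wolfe_step_contract_or_drop [DecidableEq E] {X : Set E} {f : E → ℝ}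
    {g : E → E} {L D c δ : ℝ}
    (hXconv : Convex ℝ X) (hD : 0 < D) (hL : 0 < L)
    (hconv : ConvexOn ℝ univ f) (hdiff : ∀ p, HasFDerivAt f (innerSL ℝ (g p)) p)
    (hsmooth : ∀ p ∈ X, ∀ q ∈ X, f q - f p ≤ ⟪g p, q - p⟫ + L / 2 * ‖q - p‖ ^ 2)
    {xm : E} (hxm : xm ∈ X) (hxmin : ∀ y ∈ X, f xm ≤ f y) (hc : 0 < c) (hδ : 0 < δ)
    {x x' a s v : E} {S S' : Finset E} (hx : x ∈ X) (hxS : x ∈ convexHull ℝ (S : Set E))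
    (hvx : ‖v - x‖ ≤ D)
    (hs : ∀ u ∈ S, ⟪g x, s⟫ ≤ ⟪g x, u⟫)
    (hv : v ∈ X ∧ ∀ u ∈ X, ⟪g x, v⟫ ≤ ⟪g x, u⟫)
    (hsharp : 1 / c * √(f x - f xm) ≤ ⟪g x, a - v⟫ / δ)
    (hcorrective : ⟪g x, a - s⟫ ≥ ⟪g x, x - v⟫ →
      ((f x' ≤ f x ∧ S' ⊆ S ∧ S'.card < S.card) ∨
       (f x - f x' ≥ ⟪g x, a - s⟫ ^ 2 / (2 * L * D ^ 2) ∧ S' ⊆ S)))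
    (hfw : ¬(⟪g x, a - s⟫ ≥ ⟪g x, x - v⟫) →
      ∃ γ ∈ Icc (0 : ℝ) 1, x' = x + γ • (v - x) ∧
        (∀ γ' ∈ Icc (0 : ℝ) 1, f x' ≤ f (x + γ' • (v - x))) ∧ S' = insert v S) :
    (f x' - f xm ≤ (1 - min (1 / 2) (δ ^ 2 / (8 * L * c ^ 2 * D ^ 2))) * (f x - f xm) ∧
        S'.card ≤ S.card + 1) ∨
      (f x' - f xm ≤ f x - f xm ∧ S'.card < S.card) := by
  have hgap := sub_le_inner_sub_of_forall_inner_le hconv hdiff hxm hv.2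
  have hh : 0 ≤ f x - f xm := sub_nonneg.mpr (hxmin x hx)
  -- `⟪∇f x, s - x⟫ ≤ 0` because `x` lies in the hull of the atoms over which `s` is minimal
  have hsplit : ⟪g x, a - v⟫ ≤ ⟪g x, a - s⟫ + ⟪g x, x - v⟫ := by
    have hsx := le_inner_of_mem_convexHull (fun u hu => hs u (Finset.mem_coe.mp hu)) hxS
    simp only [inner_sub_right]
    linarith
  by_cases hcase : ⟪g x, a - s⟫ ≥ ⟪g x, x - v⟫
  · rcases hcorrective hcase with ⟨hdrop, -, hcard⟩ | ⟨hdesc, hsub⟩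
    · exact Or.inr ⟨by linarith, hcard⟩
    · refine Or.inl ⟨?_, (Finset.card_le_card hsub).trans (Nat.le_succ _)⟩
      have := min_mul_le_of_sharp hL hD hc hδ hh (hgap.trans hcase) hsharp (by linarith)
        ((min_le_right _ _).trans hdesc)
      linarith
  · obtain ⟨γ, -, -, hls, rfl⟩ := hfw hcase
    refine Or.inl ⟨?_, Finset.card_insert_le _ _⟩
    have := min_mul_le_of_sharp hL hD hc hδ hh hgap hsharp (by linarith)
      (min_le_sub_of_lineSearch hXconv hsmooth hL hD hx hv.1 hvx hls)
    linarith

end InnerProduct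

theorem corrective_frank_wolfe_linear_general
    {E : Type*} [NormedAddCommGroup E] [InnerProductSpace ℝ E]
    [DecidableEq E]
    (X : Set E) (hXconv : Convex ℝ X)
    (D L : ℝ) (hD : 0 < D) (hL : 0 < L)
    (hdiam : ∀ p ∈ X, ∀ q ∈ X, ‖p - q‖ ≤ D)
    (f : E → ℝ) (g : E → E)
    (hconv : ConvexOn ℝ Set.univ f)
    (hdiff : ∀ p : E, HasFDerivAt f ((innerSL ℝ) (g p)) p)
    (hsmooth : ∀ p ∈ X, ∀ q ∈ X, f q - f p ≤ ⟪g p, q - p⟫ + L / 2 * ‖q - p‖ ^ 2)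
    (T : ℕ)
    (x : ℕ → E) (S : ℕ → Finset E) (a s v : ℕ → E)
    (hxX : ∀ t ≤ T, x t ∈ X)
    (hS0 : S 0 = {x 0})
    (hxconv : ∀ t ≤ T, x t ∈ convexHull ℝ (S t : Set E))
    (hs : ∀ t < T, s t ∈ S t ∧ ∀ u ∈ S t, ⟪g (x t), s t⟫ ≤ ⟪g (x t), u⟫)
    (hv : ∀ t < T, v t ∈ X ∧ ∀ u ∈ X, ⟪g (x t), v t⟫ ≤ ⟪g (x t), u⟫)
    (hcorrective : ∀ t < T, ⟪g (x t), a t - s t⟫ ≥ ⟪g (x t), x t - v t⟫ →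
      ((f (x (t + 1)) ≤ f (x t) ∧ S (t + 1) ⊆ S t ∧ (S (t + 1)).card < (S t).card) ∨
       (f (x t) - f (x (t + 1)) ≥ ⟪g (x t), a t - s t⟫ ^ 2 / (2 * L * D ^ 2) ∧
         S (t + 1) ⊆ S t)))
    (hfw : ∀ t < T, ¬(⟪g (x t), a t - s t⟫ ≥ ⟪g (x t), x t - v t⟫) →
      ∃ γ ∈ Set.Icc (0:ℝ) 1,
        x (t + 1) = x t + γ • (v t - x t) ∧
        (∀ γ' ∈ Set.Icc (0:ℝ) 1, f (x (t + 1)) ≤ f (x t + γ' • (v t - x t))) ∧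
        S (t + 1) = insert (v t) (S t))
    (xm : E) (hxm : xm ∈ X) (hxmin : ∀ y ∈ X, f xm ≤ f y)
    (c δ : ℝ) (hc : 0 < c) (hδ : 0 < δ)
    (hsharp : ∀ t < T,
      (1 / c) * Real.sqrt (f (x t) - f xm) ≤ ⟪g (x t), a t - v t⟫ / δ) :
    f (x T) - f xm ≤
      (f (x 0) - f xm) *
        Real.exp (-(min (1 / 4) (δ ^ 2 / (16 * L * c ^ 2 * D ^ 2))) * T) := by
  have hstep := fun t (ht : t < T) =>
    corrective_frank_wolfe_step_contract_or_drop hXconv hD hL hconv hdiff hsmooth hxm hxmin hc hδ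
      (hxX t ht.le) (hxconv t ht.le) (hdiam _ (hv t ht).1 _ (hxX t ht.le)) (hs t ht).2 (hv t ht)
      (hsharp t ht) (hcorrective t ht) (hfw t ht)
  have hcard0 : (S 0).card ≤ 1 := by simp [hS0]
  have hcardT : 1 ≤ (S T).card :=
    Finset.card_pos.mpr (Finset.coe_nonempty.mp
      (convexHull_nonempty_iff.mp ⟨x T, hxconv T le_rfl⟩))
  have hrate : min (1 / 4) (δ ^ 2 / (16 * L * c ^ 2 * D ^ 2)) =
      min (1 / 2) (δ ^ 2 / (8 * L * c ^ 2 * D ^ 2)) / 2 := by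
    rw [← min_div_div_right zero_le_two]
    congr 1 <;> ring
  have hrate_le : min (1 / 2) (δ ^ 2 / (8 * L * c ^ 2 * D ^ 2)) ≤ 1 :=
    (min_le_left _ _).trans (by norm_num)
  rw [hrate]
  exact le_mul_exp_of_contract_or_drop (h := fun t => f (x t) - f xm) (k := fun t => (S t).card)
    (by positivity) hrate_le (sub_nonneg.mpr (hxmin _ (hxX 0 T.zero_le))) hcard0 hcardT hstep

/-- Linear convergence of the Corrective Frank-Wolfe algorithm under the geometric sharpness
estimate `(1/c)·(f (x t) - f*)^(1/2) ≤ ⟪∇f (x t), a t - v t⟫ / δ`: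
`f (x T) - f* ≤ (f (x 0) - f*)·exp(-min{1/4, δ²/(16Lc²D²)}·T)`. -/
theorem corrective_frank_wolfe_linear
    {E : Type*} [NormedAddCommGroup E] [InnerProductSpace ℝ E] [FiniteDimensional ℝ E]
    [DecidableEq E]
    (X : Set E) (hXcomp : IsCompact X) (hXconv : Convex ℝ X)
    (D L : ℝ) (hD : 0 < D) (hL : 0 < L)
    (hdiam : ∀ p ∈ X, ∀ q ∈ X, ‖p - q‖ ≤ D)
    (f : E → ℝ) (g : E → E)
    (hconv : ConvexOn ℝ Set.univ f)
    (hdiff : ∀ p : E, HasFDerivAt f ((innerSL ℝ) (g p)) p)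
    (hsmooth : ∀ p ∈ X, ∀ q ∈ X, f q - f p ≤ ⟪g p, q - p⟫ + L / 2 * ‖q - p‖ ^ 2)
    (T : ℕ) (hT : 1 ≤ T)
    (x : ℕ → E) (S : ℕ → Finset E) (a s v : ℕ → E)
    (hxX : ∀ t ≤ T, x t ∈ X)
    (hSX : ∀ t ≤ T, (S t : Set E) ⊆ X)
    (hS0 : S 0 = {x 0})
    (hxconv : ∀ t ≤ T, x t ∈ convexHull ℝ (S t : Set E))
    (ha : ∀ t < T, a t ∈ S t ∧ ∀ u ∈ S t, ⟪g (x t), u⟫ ≤ ⟪g (x t), a t⟫)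
    (hs : ∀ t < T, s t ∈ S t ∧ ∀ u ∈ S t, ⟪g (x t), s t⟫ ≤ ⟪g (x t), u⟫)
    (hv : ∀ t < T, v t ∈ X ∧ ∀ u ∈ X, ⟪g (x t), v t⟫ ≤ ⟪g (x t), u⟫)
    (hcorrective : ∀ t < T, ⟪g (x t), a t - s t⟫ ≥ ⟪g (x t), x t - v t⟫ →
      ((f (x (t + 1)) ≤ f (x t) ∧ S (t + 1) ⊆ S t ∧ (S (t + 1)).card < (S t).card) ∨
       (f (x t) - f (x (t + 1)) ≥ ⟪g (x t), a t - s t⟫ ^ 2 / (2 * L * D ^ 2) ∧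
         S (t + 1) ⊆ S t)))
    (hfw : ∀ t < T, ¬(⟪g (x t), a t - s t⟫ ≥ ⟪g (x t), x t - v t⟫) →
      ∃ γ ∈ Set.Icc (0:ℝ) 1,
        x (t + 1) = x t + γ • (v t - x t) ∧
        (∀ γ' ∈ Set.Icc (0:ℝ) 1, f (x (t + 1)) ≤ f (x t + γ' • (v t - x t))) ∧
        S (t + 1) = insert (v t) (S t))
    (xm : E) (hxm : xm ∈ X) (hxmin : ∀ y ∈ X, f xm ≤ f y)
    (c δ : ℝ) (hc : 0 < c) (hδ : 0 < δ)
    (hsharp : ∀ t < T,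
      (1 / c) * Real.sqrt (f (x t) - f xm) ≤ ⟪g (x t), a t - v t⟫ / δ) :
    f (x T) - f xm ≤
      (f (x 0) - f xm) *
        Real.exp (-(min (1 / 4) (δ ^ 2 / (16 * L * c ^ 2 * D ^ 2))) * T) :=
  corrective_frank_wolfe_linear_general X hXconv D L hD hL hdiam f g hconv hdiff hsmooth T x S a s v
    hxX hS0 hxconv hs hv hcorrective hfw xm hxm hxmin c δ hc hδ hsharp
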